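/- arXiv:1510.04310 — 8 statements merged into one kernel-verified Lean document; each statement's English description precedes it below -/
import Mathlib

section
/- Define Sf_{n,k}(p,q) by Sf_{0,0} = 1, Sf_{n,k} = 0 if k > n or k < 0, and Sf_{n+1,k} = Sf_{n,k-1} + F_k(p,q)·Sf_{n,k}. Then for all n ≥ 0, x^n = Σ_{k=1}^n Sf_{n,k}(p,q)·x·(x−F_1(p,q))·(x−F_2(p,q))···(x−F_{k-1}(p,q)) as polynomials in x (with the k=0 term interpreted appropriately for n=0). -/
open Polynomial Finset

variable {R : Type*} [CommRing R]

/-- The p,q-Fibonacci polynomials: F_0 = 0, F_1 = q, F_2 = q^2,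
    F_n = q*F_{n-1} + p*F_{n-2} for n ≥ 3. -/
def fibP (p q : R) : ℕ → R
  | 0 => 0
  | 1 => q
  | 2 => q ^ 2
  | n + 3 => q * fibP p q (n + 2) + p * fibP p q (n + 1)

/-- cf_{n,k}(p,q): cf_{0,0}=1, cf_{n,k}=0 if k>n or k<0,
    cf_{n+1,k} = cf_{n,k-1} + F_n(p,q)*cf_{n,k}. -/
def cfP (p q : R) : ℕ → ℕ → R
  | 0, 0 => 1
  | 0, _ + 1 => 0
  | n + 1, 0 => fibP p q n * cfP p q n 0
  | n + 1, k + 1 => cfP p q n k + fibP p q n * cfP p q n (k + 1)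

/-- Sf_{n,k}(p,q): Sf_{0,0}=1, Sf_{n,k}=0 if k>n or k<0,
    Sf_{n+1,k} = Sf_{n,k-1} + F_k(p,q)*Sf_{n,k}. -/
def SfP (p q : R) : ℕ → ℕ → R
  | 0, 0 => 1
  | 0, _ + 1 => 0
  | n + 1, 0 => fibP p q 0 * SfP p q n 0
  | n + 1, k + 1 => SfP p q n k + fibP p q (k + 1) * SfP p q n (k + 1)

/-- sf_{n,k}(p,q): sf_{0,0}=1, sf_{n,k}=0 if k>n or k<0,
    sf_{n+1,k} = sf_{n,k-1} - F_n(p,q)*sf_{n,k}. -/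
def sfP (p q : R) : ℕ → ℕ → R
  | 0, 0 => 1
  | 0, _ + 1 => 0
  | n + 1, 0 => - (fibP p q n * sfP p q n 0)
  | n + 1, k + 1 => sfP p q n k - fibP p q n * sfP p q n (k + 1)

lemma SfP_eq_zero (p q : R) : ∀ n k, n < k → SfP p q n k = 0 := by
  intro n
  induction n with
  | zero =>
    intro k hk
    match k, hk with
    | k + 1, _ => rfl
  | succ n ih =>
    intro k hk
    match k, hk with
    | k + 1, hk =>
      show SfP p q n k + fibP p q (k + 1) * SfP p q n (k + 1) = 0
      rw [ih k (by omega), ih (k + 1) (by omega)]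
      ring

theorem SfP_product_formula (p q : R) (n : ℕ) :
    (Polynomial.X : Polynomial R) ^ n =
      ∑ k ∈ Finset.range (n + 1), Polynomial.C (SfP p q n k) *
        ∏ i ∈ Finset.range k, (Polynomial.X - Polynomial.C (fibP p q i)) := by
  induction n with
  | zero => simp [SfP]
  | succ n ih =>
    have h0 : fibP p q 0 = 0 := rfl
    rw [pow_succ, ih, Finset.sum_mul]
    have key : ∀ k, (C (SfP p q n k) * ∏ i ∈ range k, (X - C (fibP p q i))) * X
        = C (SfP p q n k) * ∏ i ∈ range (k + 1), (X - C (fibP p q i))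
          + C (fibP p q k * SfP p q n k) * ∏ i ∈ range k, (X - C (fibP p q i)) := by
      intro k
      rw [Finset.prod_range_succ, map_mul]
      ring
    simp_rw [key]
    rw [Finset.sum_add_distrib]
    -- second LHS sum: reindex
    have hB : ∑ k ∈ range (n + 1), C (fibP p q k * SfP p q n k) *
          ∏ i ∈ range k, (X - C (fibP p q i))
        = ∑ k ∈ range (n + 1), C (fibP p q (k + 1) * SfP p q n (k + 1)) *
          ∏ i ∈ range (k + 1), (X - C (fibP p q i)) := by
      rw [Finset.sum_range_succ' (fun k => C (fibP p q k * SfP p q n k) *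
          ∏ i ∈ range k, (X - C (fibP p q i))) n,
        Finset.sum_range_succ (fun k => C (fibP p q (k + 1) * SfP p q n (k + 1)) *
          ∏ i ∈ range (k + 1), (X - C (fibP p q i))) n]
      rw [h0, SfP_eq_zero p q n (n + 1) (by omega)]
      simp
    rw [hB, ← Finset.sum_add_distrib]
    rw [Finset.sum_range_succ' (fun k => C (SfP p q (n + 1) k) *
        ∏ i ∈ range k, (X - C (fibP p q i))) (n + 1)]
    have h00 : SfP p q (n + 1) 0 = 0 := by
      show fibP p q 0 * SfP p q n 0 = 0
      rw [h0]; ring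
    rw [h00]
    simp only [map_zero, zero_mul, add_zero]
    refine Finset.sum_congr rfl fun k _ => ?_
    show _ = C (SfP p q n k + fibP p q (k + 1) * SfP p q n (k + 1)) * _
    rw [map_add]
    ring
end

section
/- The lower-triangular infinite matrices ||Sf_{n,k}(p,q)|| and ||sf_{n,k}(p,q)|| are inverse to each other: for all 0 ≤ k ≤ n, Σ_{j=k}^n Sf_{n,j}(p,q)·sf_{j,k}(p,q) = 1 if n = k and 0 otherwise. -/
open Polynomial Finset

variable {R : Type*} [CommRing R]

lemma sfP_zero_of_lt (p q : R) : ∀ n k : ℕ, n < k → sfP p q n k = 0 := by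
  intro n
  induction n with
  | zero => intro k hk; match k, hk with
            | k + 1, _ => rfl
  | succ n ih =>
    intro k hk
    match k, hk with
    | k + 1, hk =>
      have h1 : n < k := by omega
      have h2 : n < k + 1 := by omega
      simp [sfP, ih k h1, ih (k + 1) h2]

lemma SfP_zero_of_lt (p q : R) : ∀ n k : ℕ, n < k → SfP p q n k = 0 := by
  intro n
  induction n with
  | zero => intro k hk; match k, hk with
            | k + 1, _ => rfl
  | succ n ih =>
    intro k hk
    match k, hk with
    | k + 1, hk =>
      have h1 : n < k := by omega
      have h2 : n < k + 1 := by omega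
      simp [SfP, ih k h1, ih (k + 1) h2]

lemma key_succ (p q : R) (n k : ℕ) :
    ∑ j ∈ Finset.range (n + 2), SfP p q (n + 1) j * sfP p q j (k + 1) =
      ∑ j ∈ Finset.range (n + 1), SfP p q n j * sfP p q j k := by
  set g : ℕ → R := fun j => fibP p q j * SfP p q n j * sfP p q j (k + 1) with hg
  rw [Finset.sum_range_succ' (fun j => SfP p q (n + 1) j * sfP p q j (k + 1)) (n + 1)]
  have h0 : SfP p q (n + 1) 0 * sfP p q 0 (k + 1) = 0 := by
    simp [sfP]
  rw [h0, add_zero]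
  have hterm : ∀ i, SfP p q (n + 1) (i + 1) * sfP p q (i + 1) (k + 1) =
      SfP p q n i * sfP p q i k + (g (i + 1) - g i) := by
    intro i
    show (SfP p q n i + fibP p q (i + 1) * SfP p q n (i + 1)) *
        (sfP p q i k - fibP p q i * sfP p q i (k + 1)) = _
    simp only [hg]
    show _ = _ + (fibP p q (i+1) * SfP p q n (i+1) *
      (sfP p q i k - fibP p q i * sfP p q i (k + 1)) - _)
    ring
  simp only [hterm]
  rw [Finset.sum_add_distrib, Finset.sum_range_sub g (n + 1)]
  have hgn : g (n + 1) = 0 := by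
    simp [hg, SfP_zero_of_lt p q n (n + 1) (by omega)]
  have hg0 : g 0 = 0 := by simp [hg, fibP]
  rw [hgn, hg0]; ring

lemma key_zero (p q : R) (n : ℕ) :
    ∑ j ∈ Finset.range (n + 2), SfP p q (n + 1) j * sfP p q j 0 = 0 := by
  set g : ℕ → R := fun j => fibP p q j * SfP p q n j * sfP p q j 0 with hg
  rw [Finset.sum_range_succ' (fun j => SfP p q (n + 1) j * sfP p q j 0) (n + 1)]
  have h0 : SfP p q (n + 1) 0 * sfP p q 0 0 = 0 := by
    show fibP p q 0 * SfP p q n 0 * sfP p q 0 0 = 0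
    simp [fibP]
  rw [h0, add_zero]
  have hterm : ∀ i, SfP p q (n + 1) (i + 1) * sfP p q (i + 1) 0 = g (i + 1) - g i := by
    intro i
    show (SfP p q n i + fibP p q (i + 1) * SfP p q n (i + 1)) *
        (-(fibP p q i * sfP p q i 0)) = _
    simp only [hg]
    show _ = fibP p q (i+1) * SfP p q n (i+1) * (-(fibP p q i * sfP p q i 0)) - _
    ring
  simp only [hterm]
  rw [Finset.sum_range_sub g (n + 1)]
  have hgn : g (n + 1) = 0 := by
    simp [hg, SfP_zero_of_lt p q n (n + 1) (by omega)]
  have hg0 : g 0 = 0 := by simp [hg, fibP]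
  rw [hgn, hg0]; ring

lemma range_version (p q : R) : ∀ n k : ℕ, k ≤ n →
    ∑ j ∈ Finset.range (n + 1), SfP p q n j * sfP p q j k =
      if n = k then 1 else 0 := by
  intro n
  induction n with
  | zero =>
    intro k hk
    interval_cases k
    simp [SfP, sfP]
  | succ n ih =>
    intro k hk
    match k with
    | 0 =>
      rw [key_zero]
      simp
    | k + 1 =>
      rw [key_succ, ih k (by omega)]
      simp

theorem SfP_sfP_inverse (p q : R) (n k : ℕ) (hk : k ≤ n) :
    ∑ j ∈ Finset.Icc k n, SfP p q n j * sfP p q j k =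
      if n = k then 1 else 0 := by
  rw [← range_version p q n k hk]
  apply Finset.sum_subset
  · intro j hj
    simp only [Finset.mem_Icc] at hj
    simp only [Finset.mem_range]
    omega
  · intro j hj hj'
    simp only [Finset.mem_range] at hj
    simp only [Finset.mem_Icc] at hj'
    have : j < k := by omega
    rw [sfP_zero_of_lt p q j k this, mul_zero]
end

section
/- For all k ≥ 1, the generating function Σ_{n ≥ k} Sf_{n,k}(p,q)·t^n equals t^k / ((1−F_1(p,q)t)(1−F_2(p,q)t)···(1−F_k(p,q)t)) as formal power series in t. -/
open Polynomial Finset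

variable {R : Type*} [CommRing R]

open PowerSeries in
theorem PowerSeries.mk_SfP_zero (p q : R) : mk (fun n => SfP p q n 0) = 1 := by
  have hSfP : ∀ n, SfP p q n 0 = if n = 0 then 1 else 0 := by
    intro n
    induction n with
    | zero => rfl
    | succ n _ => simp [SfP, fibP]
  ext n
  simp [hSfP, coeff_one]

open PowerSeries in
theorem PowerSeries.mk_SfP_succ_mul (p q : R) (k : ℕ) :
    mk (fun n => SfP p q n (k + 1)) * (1 - C (fibP p q (k + 1)) * X) =
      X * mk (fun n => SfP p q n k) := by
  ext n
  rcases n with _ | n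
  · simp [SfP]
  · rw [mul_sub, mul_one, mul_comm (C _) X, ← mul_assoc, map_sub, coeff_mul_C,
      coeff_succ_mul_X, coeff_succ_X_mul, coeff_mk, coeff_mk, coeff_mk, SfP]
    ring

theorem SfP_generating_function_general (p q : R) (k : ℕ) :
    (PowerSeries.mk fun n => SfP p q n k) *
        ∏ i ∈ Finset.Icc 1 k, (1 - PowerSeries.C (fibP p q i) * PowerSeries.X) =
      PowerSeries.X ^ k := by
  induction k with
  | zero => simp [PowerSeries.mk_SfP_zero]
  | succ k ih =>
    rw [prod_Icc_succ_top (Nat.le_add_left 1 k), mul_left_comm, PowerSeries.mk_SfP_succ_mul,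
      mul_left_comm, mul_comm (∏ i ∈ _, _), ih, pow_succ']

theorem SfP_generating_function (p q : R) (k : ℕ) (hk : 1 ≤ k) :
    (PowerSeries.mk fun n => SfP p q n k) *
        ∏ i ∈ Finset.Icc 1 k, (1 - PowerSeries.C (fibP p q i) * PowerSeries.X) =
      PowerSeries.X ^ k :=
  SfP_generating_function_general p q k
end

section
/- For all n ≥ k ≥ 3, the coefficient of p^1 in Sf_{n,k}(p,1) equals C(k−1,2)·C(n−1,k), where C denotes the ordinary binomial coefficient. -/
open Polynomial Finset

variable {R : Type*} [CommRing R]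

/-!
Only the constant and linear coefficients in `p` matter. At `q = 1`, `F_m` has constant
coefficient `1` for `m ≥ 1` and linear coefficient `m - 2`. Hence the constant coefficients of
`Sf_{n,k}` obey Pascal's rule and equal `C(n-1,k-1)` for `n, k ≥ 1`, and the linear ones satisfy
`b(n+1,k) = b(n,k-1) + b(n,k) + (k-2) C(n-1,k-1)`. The same recurrence holds for
`C(k-1,2) C(n-1,k)`, by Pascal's rule and `C(k-1,2) = C(k-2,2) + (k-2)`.
-/

theorem fibP_X_one_coeff_zero (m : ℕ) :
    (fibP (X : R[X]) 1 m).coeff 0 = if m = 0 then 0 else 1 := by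
  induction m using fibP.induct with
  | case4 n ih _ => simp [fibP, ih]
  | _ => simp [fibP]

theorem fibP_X_one_coeff_one (m : ℕ) : (fibP (X : R[X]) 1 m).coeff 1 = ((m - 2 : ℕ) : R) := by
  induction m using fibP.induct with
  | case1 => simp [fibP]
  | case2 | case3 => simp [fibP, coeff_one]
  | case4 n ih _ =>
    rw [fibP, coeff_add, mul_coeff_one, mul_coeff_one, ih, fibP_X_one_coeff_zero]
    simp [coeff_one, fibP_X_one_coeff_zero, show n + 2 - 2 = n by omega,
      show n + 3 - 2 = n + 1 by omega]

namespace SfP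

theorem succ_zero (p q : R) (n : ℕ) : SfP p q (n + 1) 0 = 0 := by
  simp [SfP, fibP]

theorem X_one_succ_succ_coeff_zero (n k : ℕ) :
    (SfP (X : R[X]) 1 (n + 1) (k + 1)).coeff 0 = (n.choose k : R) := by
  induction n generalizing k with
  | zero => cases k <;> simp [SfP]
  | succ n ih =>
    rw [SfP, coeff_add, mul_coeff_zero, fibP_X_one_coeff_zero, ih]
    cases k with
    | zero => simp [succ_zero]
    | succ k => simp [ih, Nat.choose_succ_succ, add_comm]

theorem X_one_succ_succ_coeff_one (n k : ℕ) :
    (SfP (X : R[X]) 1 (n + 1) (k + 1)).coeff 1 = (k.choose 2 * n.choose (k + 1) : R) := by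
  induction n generalizing k with
  | zero => cases k <;> simp [SfP, coeff_one]
  | succ n ih =>
    rw [SfP, coeff_add, mul_coeff_one, fibP_X_one_coeff_zero, fibP_X_one_coeff_one, ih,
      X_one_succ_succ_coeff_zero]
    cases k with
    | zero => simp [succ_zero]
    | succ k =>
      have choose_two_succ : (k + 1).choose 2 = k.choose 2 + k := by
        simp [Nat.choose_succ_succ, add_comm]
      rw [ih, choose_two_succ, Nat.choose_succ_succ n (k + 1), show k + 1 + 1 - 2 = k by omega]
      push_cast
      ring

end SfP

theorem SfP_coeff_p_one_general (n k : ℕ) :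
    (SfP (Polynomial.X : Polynomial ℤ) 1 n k).coeff 1 =
      ((k - 1).choose 2 * (n - 1).choose k : ℤ) := by
  rcases n with _ | n
  · cases k <;> simp [SfP, coeff_one]
  rcases k with _ | k
  · simp [SfP.succ_zero]
  simpa using SfP.X_one_succ_succ_coeff_one n k

theorem SfP_coeff_p_one (n k : ℕ) (hk : 3 ≤ k) (hkn : k ≤ n) :
    (SfP (Polynomial.X : Polynomial ℤ) 1 n k).coeff 1 =
      ((k - 1).choose 2 * (n - 1).choose k : ℤ) :=
  SfP_coeff_p_one_general n k
end

section
/- For all n ≥ 3 and s ≥ 0, the coefficient of p^s in Sf_{n,3}(p,1) equals C(n−1, s+2). -/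
open Polynomial Finset

variable {R : Type*} [CommRing R]

lemma Sf_zero (n : ℕ) : SfP (X : ℤ[X]) 1 (n + 1) 0 = 0 := by
  show fibP (X : ℤ[X]) 1 0 * _ = 0
  simp [fibP]

lemma Sf_one (n : ℕ) : SfP (X : ℤ[X]) 1 (n + 1) 1 = 1 := by
  induction n with
  | zero => show SfP (X : ℤ[X]) 1 0 0 + fibP (X:ℤ[X]) 1 1 * SfP (X:ℤ[X]) 1 0 1 = 1
            simp [SfP, fibP]
  | succ m ih =>
      show SfP (X : ℤ[X]) 1 (m+1) 0 + fibP (X:ℤ[X]) 1 1 * SfP (X:ℤ[X]) 1 (m+1) 1 = 1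
      rw [Sf_zero, ih]; simp [fibP]

lemma Sf_two (n : ℕ) : SfP (X : ℤ[X]) 1 (n + 1) 2 = (n : ℤ[X]) := by
  induction n with
  | zero => show SfP (X : ℤ[X]) 1 0 1 + fibP (X:ℤ[X]) 1 2 * SfP (X:ℤ[X]) 1 0 2 = _
            simp [SfP, fibP]
  | succ m ih =>
      show SfP (X : ℤ[X]) 1 (m+1) 1 + fibP (X:ℤ[X]) 1 2 * SfP (X:ℤ[X]) 1 (m+1) 2 = _
      rw [Sf_one, ih]; simp [fibP]; ring

lemma fib_three : fibP (X : ℤ[X]) 1 3 = 1 + X := by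
  show (1:ℤ[X]) * fibP (X:ℤ[X]) 1 2 + X * fibP (X:ℤ[X]) 1 1 = 1 + X
  simp [fibP]

theorem SfP_three_coeff (n s : ℕ) (hn : 3 ≤ n) :
    (SfP (Polynomial.X : Polynomial ℤ) 1 n 3).coeff s = ((n - 1).choose (s + 2) : ℤ) := by
  induction n generalizing s with
  | zero => omega
  | succ m ih =>
    rcases Nat.lt_or_ge m 3 with hm | hm
    · interval_cases m
      · omega
      · omega
      · -- n = 3
        show (SfP (X:ℤ[X]) 1 2 2 + fibP (X:ℤ[X]) 1 3 * SfP (X:ℤ[X]) 1 2 3).coeff s = _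
        have h23 : SfP (X:ℤ[X]) 1 2 3 = 0 := by
          show (SfP (X:ℤ[X]) 1 1 2 + fibP (X:ℤ[X]) 1 3 * SfP (X:ℤ[X]) 1 1 3) = 0
          have : SfP (X:ℤ[X]) 1 1 3 = SfP (X:ℤ[X]) 1 0 2 + fibP (X:ℤ[X]) 1 3 * SfP (X:ℤ[X]) 1 0 3 := rfl
          rw [this]
          simp [SfP, fibP]
        rw [h23, mul_zero, add_zero]
        have h22 : SfP (X:ℤ[X]) 1 (1+1) 2 = ((1:ℕ) : ℤ[X]) := Sf_two 1
        rw [h22]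
        rcases s with _ | s
        · simp
        · simp [Polynomial.coeff_one, Nat.choose]
    · -- m ≥ 3
      have key : SfP (X:ℤ[X]) 1 (m+1) 3
          = SfP (X:ℤ[X]) 1 m 2 + (1 + X) * SfP (X:ℤ[X]) 1 m 3 := by
        rw [← fib_three]; rfl
      obtain ⟨j, rfl⟩ : ∃ j, m = j + 1 := ⟨m - 1, by omega⟩
      rw [key, Sf_two, add_mul, one_mul]
      rcases s with _ | s
      · rw [Polynomial.coeff_add, Polynomial.coeff_add,
          Polynomial.coeff_X_mul_zero, ih 0 hm]
        have : ((j+1+1-1).choose (0+2) : ℤ) = ((j+1-1).choose 2 : ℤ) + (j+1-1).choose 1 := by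
          simp [Nat.choose]; ring
        rw [this]
        simp [Nat.choose_one_right]
        ring
      · rw [Polynomial.coeff_add, Polynomial.coeff_add,
          Polynomial.coeff_X_mul, ih (s+1) hm, ih s hm]
        have hc : (j+1+1-1).choose (s+1+2) = (j+1-1).choose (s+1+2) + (j+1-1).choose (s+2) := by
          simp [Nat.succ_sub_one, Nat.choose]; ring
        rw [hc]
        have : ((j : ℤ[X])).coeff (s+1) = 0 := by
          simp [Polynomial.coeff_natCast_ite]
        rw [this]
        push_cast; ring
end

section
/- For all n ≥ 4, the coefficient of p^1 in cf_{n,1}(p,q) equals C(n−2,2)·q^{C(n,2)−2}, and this coefficient is 0 for n = 1, 2, 3. -/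
open Polynomial Finset

variable {R : Type*} [CommRing R]

lemma fibP_zero' {R : Type*} [CommRing R] (p q : R) : fibP p q 0 = 0 := rfl
lemma fibP_one' {R : Type*} [CommRing R] (p q : R) : fibP p q 1 = q := rfl
lemma fibP_two' {R : Type*} [CommRing R] (p q : R) : fibP p q 2 = q ^ 2 := rfl
lemma fibP_add_three {R : Type*} [CommRing R] (p q : R) (n : ℕ) :
    fibP p q (n + 3) = q * fibP p q (n + 2) + p * fibP p q (n + 1) := rfl

lemma cfP_zero_zero {R : Type*} [CommRing R] (p q : R) : cfP p q 0 0 = 1 := rfl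
lemma cfP_zero_succ {R : Type*} [CommRing R] (p q : R) (k : ℕ) :
    cfP p q 0 (k + 1) = 0 := rfl
lemma cfP_succ_zero {R : Type*} [CommRing R] (p q : R) (n : ℕ) :
    cfP p q (n + 1) 0 = fibP p q n * cfP p q n 0 := rfl
lemma cfP_succ_succ {R : Type*} [CommRing R] (p q : R) (n k : ℕ) :
    cfP p q (n + 1) (k + 1) = cfP p q n k + fibP p q n * cfP p q n (k + 1) := rfl

lemma choose2_succ (n : ℕ) : (n + 1).choose 2 = n.choose 2 + n := by
  rw [Nat.choose_succ_succ, Nat.choose_one_right, Nat.add_comm]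

lemma coeff_mul_one' (f g : Polynomial (Polynomial ℤ)) :
    (f * g).coeff 1 = f.coeff 0 * g.coeff 1 + f.coeff 1 * g.coeff 0 := by
  rw [coeff_mul, Finset.Nat.sum_antidiagonal_eq_sum_range_succ_mk]
  simp [Finset.sum_range_succ]

lemma fib_coeff0 : ∀ n : ℕ,
    (fibP (X : Polynomial (Polynomial ℤ)) (C X) (n + 1)).coeff 0 = X ^ (n + 1)
  | 0 => by rw [fibP_one']; simp
  | 1 => by rw [fibP_two']; simp only [← C_pow, coeff_C_zero]
  | n + 2 => by
      rw [fibP_add_three, coeff_add, mul_coeff_zero, mul_coeff_zero, coeff_X_zero,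
        zero_mul, add_zero, coeff_C_zero, fib_coeff0 (n + 1), ← pow_succ']

lemma fib_coeff1 : ∀ n : ℕ,
    (fibP (X : Polynomial (Polynomial ℤ)) (C X) (n + 2)).coeff 1 =
      (n : Polynomial ℤ) * X ^ n
  | 0 => by rw [fibP_two']; simp only [← C_pow, coeff_C]; norm_num
  | n + 1 => by
      rw [fibP_add_three, coeff_add, coeff_X_mul, coeff_C_mul, fib_coeff1 n,
        fib_coeff0 n]
      push_cast
      ring

lemma cf_zero (n : ℕ) :
    cfP (X : Polynomial (Polynomial ℤ)) (C X) (n + 1) 0 = 0 := by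
  induction n with
  | zero => rw [cfP_succ_zero, fibP_zero', zero_mul]
  | succ n ih => rw [cfP_succ_zero, ih, mul_zero]

lemma cf_succ (n : ℕ) :
    cfP (X : Polynomial (Polynomial ℤ)) (C X) (n + 2) 1 =
      fibP (X : Polynomial (Polynomial ℤ)) (C X) (n + 1) *
        cfP (X : Polynomial (Polynomial ℤ)) (C X) (n + 1) 1 := by
  rw [cfP_succ_succ, cf_zero n, zero_add]

lemma cf_one_one : cfP (X : Polynomial (Polynomial ℤ)) (C X) 1 1 = 1 := by
  rw [cfP_succ_succ, cfP_zero_zero, cfP_zero_succ, mul_zero, add_zero]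

lemma cf_coeff0 : ∀ n : ℕ,
    (cfP (X : Polynomial (Polynomial ℤ)) (C X) (n + 1) 1).coeff 0 =
      X ^ ((n + 1).choose 2)
  | 0 => by rw [cf_one_one, coeff_one]; norm_num
  | n + 1 => by
      rw [cf_succ n, mul_coeff_zero, fib_coeff0 n, cf_coeff0 n, ← pow_add,
        choose2_succ (n + 1)]
      ring

lemma cf_four : cfP (X : Polynomial (Polynomial ℤ)) (C X) 4 1 =
    (C X) ^ 6 + X * (C X) ^ 4 := by
  rw [cf_succ 2, cf_succ 1, cf_succ 0, cf_one_one, fibP_add_three, fibP_two',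
    fibP_one']
  ring

lemma cf_coeff1 : ∀ n : ℕ, ∃ m : ℕ, m + 2 = (n + 4).choose 2 ∧
    (cfP (X : Polynomial (Polynomial ℤ)) (C X) (n + 4) 1).coeff 1 =
      ((n + 2).choose 2 : Polynomial ℤ) * X ^ m
  | 0 => by
      refine ⟨4, by decide, ?_⟩
      rw [cf_four, coeff_add, coeff_X_mul]
      simp only [← C_pow, coeff_C, coeff_C_zero]
      norm_num
  | n + 1 => by
      obtain ⟨m, hm, h⟩ := cf_coeff1 n
      refine ⟨m + (n + 4), by rw [choose2_succ (n + 4)]; omega, ?_⟩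
      rw [cf_succ (n + 3), coeff_mul_one', fib_coeff0 (n + 3),
        fib_coeff1 (n + 2), h, cf_coeff0 (n + 3), ← hm]
      rw [show ((n + 1 + 2).choose 2 : ℕ) = (n + 2).choose 2 + (n + 2) from
        choose2_succ (n + 2)]
      push_cast
      ring

theorem cfP_one_coeff_p_one :
    (∀ n : ℕ, 4 ≤ n →
      (cfP (Polynomial.X : Polynomial (Polynomial ℤ)) (Polynomial.C Polynomial.X) n 1).coeff 1 =
        ((n - 2).choose 2 : Polynomial ℤ) * Polynomial.X ^ (n.choose 2 - 2)) ∧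
    (∀ n : ℕ, 1 ≤ n → n ≤ 3 →
      (cfP (Polynomial.X : Polynomial (Polynomial ℤ)) (Polynomial.C Polynomial.X) n 1).coeff 1 =
        0) := by
  constructor
  · intro n hn
    obtain ⟨k, rfl⟩ : ∃ k, n = k + 4 := ⟨n - 4, by omega⟩
    obtain ⟨m, hm, h⟩ := cf_coeff1 k
    rw [h, show k + 4 - 2 = k + 2 from rfl, show (k + 4).choose 2 - 2 = m by omega]
  · intro n h1 h3
    interval_cases n
    · rw [cf_one_one, coeff_one]; norm_num
    · rw [cf_succ 0, cf_one_one, mul_one, fibP_one']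
      exact coeff_C_ne_zero one_ne_zero
    · rw [cf_succ 1, cf_succ 0, cf_one_one, mul_one, fibP_one', fibP_two',
        ← C_pow, ← C_mul]
      exact coeff_C_ne_zero one_ne_zero
end

section
/- For all n ≥ 2, the coefficient of p^0 in cf_{n,2}(p,q) equals q^{C(n−1,2)}·[n−1]_q, where [m]_q = 1 + q + ··· + q^{m−1}. -/
open Polynomial Finset

variable {R : Type*} [CommRing R]

lemma fibP_zero_left {R : Type*} [CommRing R] (q : R) : ∀ n : ℕ, fibP (0 : R) q (n + 1) = q ^ (n + 1) := by
  intro n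
  induction n using Nat.strong_induction_on with
  | _ n ih =>
    match n with
    | 0 => simp [fibP]
    | 1 => simp [fibP]
    | m + 2 =>
      show fibP (0:R) q (m + 3) = _
      rw [fibP, ih (m + 1) (by omega), zero_mul, add_zero]
      ring

lemma cfP_zero_left_zero {R : Type*} [CommRing R] (q : R) : ∀ n : ℕ, cfP (0 : R) q (n + 1) 0 = 0 := by
  intro n
  induction n with
  | zero => simp [cfP, fibP]
  | succ m ih => rw [show m + 1 + 1 = (m + 1) + 1 from rfl, cfP, ih, mul_zero]

lemma cfP_zero_left_one {R : Type*} [CommRing R] (q : R) : ∀ n : ℕ, cfP (0 : R) q (n + 1) 1 = q ^ ((n + 1).choose 2) := by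
  intro n
  induction n with
  | zero => simp [cfP]
  | succ m ih =>
    show cfP (0:R) q ((m+1) + 1) (0 + 1) = _
    rw [cfP, cfP_zero_left_zero, ih, fibP_zero_left, zero_add, ← pow_add]
    congr 1
    have h : (m + 1 + 1).choose 2 = (m + 1).choose 1 + (m + 1).choose 2 := rfl
    rw [h, Nat.choose_one_right]

lemma cfP_zero_left_two {R : Type*} [CommRing R] (q : R) : ∀ n : ℕ, cfP (0 : R) q (n + 2) 2 = q ^ ((n + 1).choose 2) * ∑ i ∈ Finset.range (n + 1), q ^ i := by
  intro n
  induction n with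
  | zero =>
    show cfP (0:R) q (1 + 1) (1 + 1) = _
    rw [cfP]
    show cfP (0:R) q (0+1) (0+1) + fibP (0:R) q 1 * cfP (0:R) q (0+1) (1+1) = _
    rw [cfP, cfP]
    simp [cfP, fibP]
  | succ m ih =>
    show cfP (0:R) q ((m+2) + 1) (1 + 1) = _
    rw [cfP, ih, cfP_zero_left_one, fibP_zero_left]
    have h1 : (m + 1 + 1).choose 2 = (m + 1).choose 2 + (m + 1) := by
      have h : (m + 1 + 1).choose 2 = (m + 1).choose 1 + (m + 1).choose 2 := rfl
      rw [h, Nat.choose_one_right]; omega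
    conv_rhs => rw [Finset.sum_range_succ']
    rw [mul_add, pow_zero, mul_one, add_comm (q ^ (m + 1 + 1).choose 2)]
    congr 1
    rw [Finset.mul_sum, Finset.mul_sum, Finset.mul_sum]
    apply Finset.sum_congr rfl
    intro i _
    rw [← pow_add, ← pow_add, ← pow_add]
    congr 1
    omega

lemma map_fibP {R S : Type*} [CommRing R] [CommRing S] (f : R →+* S) (p q : R) :
    ∀ n, f (fibP p q n) = fibP (f p) (f q) n := by
  intro n
  induction n using Nat.strong_induction_on with
  | _ n ih =>
    match n with
    | 0 => simp [fibP]
    | 1 => simp [fibP]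
    | 2 => simp [fibP]
    | m + 3 =>
      rw [fibP, fibP, map_add, map_mul, map_mul, ih (m+2) (by omega), ih (m+1) (by omega)]

lemma map_cfP {R S : Type*} [CommRing R] [CommRing S] (f : R →+* S) (p q : R) :
    ∀ n k, f (cfP p q n k) = cfP (f p) (f q) n k := by
  intro n
  induction n with
  | zero => intro k; match k with
    | 0 => simp [cfP]
    | k + 1 => simp [cfP]
  | succ m ih =>
    intro k
    match k with
    | 0 => rw [cfP, cfP, map_mul, map_fibP, ih]
    | k + 1 => rw [cfP, cfP, map_add, map_mul, map_fibP, ih, ih]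

theorem cfP_two_coeff_p_zero (n : ℕ) (hn : 2 ≤ n) :
    (cfP (Polynomial.X : Polynomial (Polynomial ℤ)) (Polynomial.C Polynomial.X) n 2).coeff 0 =
      Polynomial.X ^ ((n - 1).choose 2) * ∑ i ∈ Finset.range (n - 1), Polynomial.X ^ i := by
  obtain ⟨m, rfl⟩ : ∃ m, n = m + 2 := ⟨n - 2, by omega⟩
  rw [Polynomial.coeff_zero_eq_eval_zero]
  have := congrArg (Polynomial.evalRingHom (0 : Polynomial ℤ))
    (rfl : cfP (Polynomial.X : Polynomial (Polynomial ℤ)) (Polynomial.C Polynomial.X) (m+2) 2 = _)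
  rw [show (cfP (Polynomial.X : Polynomial (Polynomial ℤ)) (Polynomial.C Polynomial.X) (m+2) 2).eval 0
      = (Polynomial.evalRingHom (0 : Polynomial ℤ)) (cfP Polynomial.X (Polynomial.C Polynomial.X) (m+2) 2) from rfl,
    map_cfP]
  simp only [Polynomial.coe_evalRingHom, Polynomial.eval_X, Polynomial.eval_C]
  rw [cfP_zero_left_two]
  simp [Nat.add_sub_cancel]
end

section
/- For all n ≥ 4, the coefficient of p^1 in cf_{n,2}(p,1) equals (n−2)·C(n−2,2). -/
open Polynomial Finset

variable {R : Type*} [CommRing R]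

lemma coeff_mul_one'_s19 (p q : Polynomial ℤ) :
    (p * q).coeff 1 = p.coeff 0 * q.coeff 1 + p.coeff 1 * q.coeff 0 := by
  rw [coeff_mul, Finset.Nat.sum_antidiagonal_eq_sum_range_succ_mk]
  simp [Finset.sum_range_succ, add_comm]

lemma fibS (m : ℕ) : fibP (X : Polynomial ℤ) 1 (m + 3) =
    fibP X 1 (m + 2) + X * fibP X 1 (m + 1) := by
  show (1 : Polynomial ℤ) * _ + _ = _
  rw [one_mul]

lemma cfS (n k : ℕ) : cfP (X : Polynomial ℤ) 1 (n + 1) (k + 1) =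
    cfP X 1 n k + fibP X 1 n * cfP X 1 n (k + 1) := rfl

lemma fib0 : ∀ m : ℕ, (fibP (X : Polynomial ℤ) 1 (m + 1)).coeff 0 = 1
  | 0 => by simp [fibP]
  | 1 => by simp [fibP]
  | m + 2 => by
    rw [show m + 2 + 1 = m + 3 from rfl, fibS, coeff_add, mul_coeff_zero,
      coeff_X_zero, fib0 (m + 1)]
    ring

lemma fib1 : ∀ m : ℕ, (fibP (X : Polynomial ℤ) 1 m).coeff 1 = ((m - 2 : ℕ) : ℤ)
  | 0 => by simp [fibP]
  | 1 => by simp [fibP, coeff_one]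
  | 2 => by simp [fibP, coeff_one]
  | m + 3 => by
    rw [fibS, coeff_add, coeff_X_mul, fib1 (m + 2), fib0 m]
    push_cast [Nat.add_sub_cancel]
    ring

lemma cf0zero : ∀ n : ℕ, cfP (X : Polynomial ℤ) 1 (n + 1) 0 = 0
  | 0 => by simp [cfP, fibP]
  | n + 1 => by
    show fibP (X : Polynomial ℤ) 1 (n + 1) * cfP X 1 (n + 1) 0 = 0
    rw [cf0zero n, mul_zero]

lemma cf1_c0 : ∀ n : ℕ, (cfP (X : Polynomial ℤ) 1 (n + 1) 1).coeff 0 = 1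
  | 0 => by simp [cfP, fibP]
  | n + 1 => by
    rw [cfS, cf0zero n, coeff_add, coeff_zero, mul_coeff_zero, fib0 n, cf1_c0 n]
    ring

lemma choose2_step (n : ℕ) : n.choose 2 = (n - 1).choose 2 + (n - 1) := by
  cases n with
  | zero => simp
  | succ m => simp [Nat.choose_succ_succ, Nat.add_comm]

lemma cf1_c1 : ∀ n : ℕ, (cfP (X : Polynomial ℤ) 1 (n + 1) 1).coeff 1 =
    (((n - 1).choose 2 : ℕ) : ℤ)
  | 0 => by simp [cfP, fibP, coeff_one]
  | n + 1 => by
    rw [cfS, cf0zero n, coeff_add, coeff_zero, coeff_mul_one'_s19, fib0 n,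
      fib1 (n + 1), cf1_c0 n, cf1_c1 n]
    rw [show (n + 1) - 1 = n from rfl, choose2_step n]
    push_cast [show (n + 1) - 2 = n - 1 from rfl]
    ring

lemma cf2_c0 : ∀ n : ℕ, (cfP (X : Polynomial ℤ) 1 (n + 2) 2).coeff 0 = (n + 1 : ℤ)
  | 0 => by simp [cfP, fibP]
  | n + 1 => by
    rw [show n + 1 + 2 = (n + 2) + 1 from rfl, cfS, coeff_add, mul_coeff_zero]
    rw [show (n + 2 : ℕ) = (n + 1) + 1 from rfl, cf1_c0 (n + 1), fib0 (n + 1)]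
    rw [show ((n + 1) + 1 : ℕ) = n + 2 from rfl, cf2_c0 n]
    push_cast; ring

lemma cf2_c1 : ∀ n : ℕ, (cfP (X : Polynomial ℤ) 1 (n + 2) 2).coeff 1 =
    (n : ℤ) * (n.choose 2 : ℕ)
  | 0 => by simp [cfP, fibP, coeff_one]
  | n + 1 => by
    rw [show n + 1 + 2 = (n + 2) + 1 from rfl, cfS, coeff_add, coeff_mul_one'_s19]
    rw [show (n + 2 : ℕ) = (n + 1) + 1 from rfl, cf1_c1 (n + 1), fib0 (n + 1),
      fib1 ((n + 1) + 1)]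
    rw [show ((n + 1) + 1 : ℕ) = n + 2 from rfl, cf2_c1 n, cf2_c0 n]
    rw [show ((n + 1) - 1 : ℕ) = n from rfl, show ((n + 2) - 2 : ℕ) = n from rfl]
    rw [show (n + 1).choose 2 = n.choose 2 + n by rw [choose2_step (n + 1)]; simp]
    push_cast; ring

theorem cfP_two_coeff_p_one (n : ℕ) (hn : 4 ≤ n) :
    (cfP (Polynomial.X : Polynomial ℤ) 1 n 2).coeff 1 =
      ((n - 2) * (n - 2).choose 2 : ℤ) := by
  obtain ⟨m, rfl⟩ : ∃ m, n = m + 4 := ⟨n - 4, by omega⟩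
  have h := cf2_c1 (m + 2)
  rw [show m + 4 = (m + 2) + 2 from by ring] 
  rw [h]
  have : (m + 4) - 2 = m + 2 := by omega
  rw [this]
  push_cast; ring
end
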